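/- Let X be a finite set of points in P^{n_1} × ⋯ × P^{n_k} with Hilbert function H_X. Then (i) H_X(i) ≤ H_X(i + e_l) for all i ∈ N^k and all l ∈ {1,...,k}; and (ii) if H_X(i) = H_X(i + e_l) for some l, then H_X(i + e_l) = H_X(i + 2e_l). -/

import Mathlib

open MvPolynomial

namespace MultiProjPoints

/-- The variable set of the multigraded coordinate ring of
`ℙ^{n 0} × ⋯ × ℙ^{n (k-1)}`: variables `x_{i,j}` with `i : Fin k`, `0 ≤ j ≤ n i`. -/
abbrev Var (k : ℕ) (n : Fin k → ℕ) := Σ i : Fin k, Fin (n i + 1)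

/-- The `ℕ^k`-grading weight: `deg x_{i,j} = e_i`. -/
def wt (k : ℕ) (n : Fin k → ℕ) : Var k n → (Fin k → ℕ) := fun v => Pi.single v.1 1

/-- The `i`-th standard basis vector of `ℕ^k`. -/
def e {k : ℕ} (l : Fin k) : Fin k → ℕ := Pi.single l 1

variable (K : Type) [Field K]

/-- The graded piece `R_d` of the `ℕ^k`-graded polynomial ring. -/
noncomputable def piece (k : ℕ) (n : Fin k → ℕ) (d : Fin k → ℕ) :
    Submodule K (MvPolynomial (Var k n) K) :=
  weightedHomogeneousSubmodule K (wt k n) d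

/-- `N(d) = ∏ binom (n i + d i) (d i)`, the dimension of `R_d`. -/
def NN (k : ℕ) (n : Fin k → ℕ) (d : Fin k → ℕ) : ℕ := ∏ i, (n i + d i).choose (d i)

/-- A (representative of a) point of `ℙ^{n 0} × ⋯ × ℙ^{n (k-1)}`. -/
def PointRep (k : ℕ) (n : Fin k → ℕ) := (i : Fin k) → Fin (n i + 1) → K

/-- A valid representative: every coordinate block is nonzero. -/
def IsRep {k : ℕ} {n : Fin k → ℕ} (P : PointRep K k n) : Prop := ∀ i, P i ≠ 0

/-- Two representatives define the same point of multi-projective space. -/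
def ProjEq {k : ℕ} {n : Fin k → ℕ} (P Q : PointRep K k n) : Prop :=
  ∀ i, ∃ c : K, c ≠ 0 ∧ P i = c • Q i

/-- A tuple of representatives giving `s` distinct points. -/
def SPoints {k : ℕ} {n : Fin k → ℕ} {s : ℕ} (P : Fin s → PointRep K k n) : Prop :=
  (∀ a, IsRep K (P a)) ∧ ∀ a b, a ≠ b → ¬ ProjEq K (P a) (P b)

/-- The defining ideal `I_X` of the set of points: all polynomials vanishing on
the multi-cone over the points, i.e. the intersection of the point ideals. -/
noncomputable def idealOfPoints {k : ℕ} {n : Fin k → ℕ} {s : ℕ}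
    (P : Fin s → PointRep K k n) : Ideal (MvPolynomial (Var k n) K) :=
  ⨅ (a : Fin s), ⨅ (c : Fin k → K),
    RingHom.ker (eval (fun v : Var k n => c v.1 * P a v.1 v.2))

/-- The degree-`d` piece `I_d` of an ideal, as a `K`-subspace. -/
noncomputable def idealPiece {k : ℕ} {n : Fin k → ℕ}
    (I : Ideal (MvPolynomial (Var k n) K)) (d : Fin k → ℕ) :
    Submodule K (MvPolynomial (Var k n) K) :=
  (Submodule.restrictScalars K I) ⊓ piece K k n d

/-- The multigraded Hilbert function of `X`:
`H_X(d) = dim (R/I_X)_d = dim R_d - dim (I_X)_d`. -/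
noncomputable def hilbert {k : ℕ} {n : Fin k → ℕ} {s : ℕ}
    (P : Fin s → PointRep K k n) (d : Fin k → ℕ) : ℕ :=
  NN k n d - Module.finrank K (idealPiece K (idealOfPoints K P) d)

/-- Generic position: `s` distinct points whose Hilbert function is maximal. -/
def GenericPosition {k : ℕ} {n : Fin k → ℕ} {s : ℕ} (P : Fin s → PointRep K k n) : Prop :=
  SPoints K P ∧ ∀ d : Fin k → ℕ, hilbert K P d = min (NN k n d) s

/-- `R_{e_l}·V`: the span of all products of a variable of degree `e_l`
with an element of `V`. -/
noncomputable def mulSpan {k : ℕ} {n : Fin k → ℕ} (l : Fin k)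
    (V : Submodule K (MvPolynomial (Var k n) K)) :
    Submodule K (MvPolynomial (Var k n) K) :=
  Submodule.span K {g | ∃ (m : Fin (n l + 1)) (f : MvPolynomial (Var k n) K),
    f ∈ V ∧ g = X (⟨l, m⟩ : Var k n) * f}

/-- `D = min { i ∈ ℕ^k | N(i) > s }` (minimal elements for the componentwise order). -/
def Dset (k : ℕ) (n : Fin k → ℕ) (s : ℕ) : Set (Fin k → ℕ) :=
  {i | s < NN k n i ∧ ∀ j : Fin k → ℕ, s < NN k n j → j ≤ i → j = i}

/-- The irrelevant maximal ideal of `R`, generated by all the variables. -/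
noncomputable def irrelevant (k : ℕ) (n : Fin k → ℕ) : Ideal (MvPolynomial (Var k n) K) :=
  Ideal.span (Set.range (X : Var k n → MvPolynomial (Var k n) K))

/-!
Evaluating at the chosen representatives identifies `H_X(d)` with the dimension of the image
`W_d ⊆ K^X` of the forms of degree `d`; multihomogeneity makes membership in `I_X` depend only
on these values. Over an infinite field some linear form `L` in the `l`-th block of variables
vanishes at no point of `X`, so its value vector `u` is a unit of `K^X` and `w ↦ u * w` embeds
`W_d` into `W_{d + e_l}`: this is (i). As `R_{d + e_l}` is spanned by the products `x_{l,m} * R_d`,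
the space `W_{d + e_l}` is spanned by the `x_{l,m} * W_d`. If `u * W_i = W_{i + e_l}`, then
`x_{l,m} * W_{i + e_l} = u * (x_{l,m} * W_i) ⊆ u * W_{i + e_l}`, hence
`W_{i + 2 e_l} = u * W_{i + e_l}` and the dimensions agree: this is (ii).
-/

variable {k : ℕ} {n : Fin k → ℕ}

lemma weight_wt_apply (σ : Var k n →₀ ℕ) (i : Fin k) :
    Finsupp.weight (wt k n) σ i = ∑ j, σ ⟨i, j⟩ := by
  classical
  rw [Finsupp.weight_apply, Finsupp.sum_fintype _ _ (by simp), Finset.sum_apply,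
    ← Finset.univ_sigma_univ, Finset.sum_sigma,
    Finset.sum_eq_single i (fun j _ hj => by simp [wt, hj.symm]) (by simp)]
  simp [wt]

def exponents (k : ℕ) (n : Fin k → ℕ) (d : Fin k → ℕ) : Set (Var k n →₀ ℕ) :=
  {σ | Finsupp.weight (wt k n) σ = d}

noncomputable def exponentsEquiv (d : Fin k → ℕ) :
    exponents k n d ≃ Π i, Sym (Fin (n i + 1)) (d i) :=
  ((Finsupp.equivFunOnFinite.trans (Equiv.piCurry fun _ _ => ℕ)).subtypeEquiv fun σ => by
    simp only [exponents, Set.mem_ofPred_eq, _root_.funext_iff, weight_wt_apply]; rfl).trans <|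
    (Equiv.subtypePiEquivPi (p := fun i (g : Fin (n i + 1) → ℕ) => ∑ j, g j = d i)).trans <|
    Equiv.piCongrRight fun i => (Sym.equivNatSumOfFintype _ _).symm

instance (d : Fin k → ℕ) : Finite (exponents k n d) :=
  .of_equiv _ (exponentsEquiv d).symm

lemma card_exponents (d : Fin k → ℕ) : Nat.card (exponents k n d) = NN k n d := by
  classical
  rw [Nat.card_congr (exponentsEquiv d), Nat.card_pi, NN]
  refine Finset.prod_congr rfl fun i _ => ?_
  rw [Nat.card_eq_fintype_card, Sym.card_sym_eq_choose, Fintype.card_fin, Nat.add_right_comm,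
    Nat.add_sub_cancel]

noncomputable def pieceEquivFinsupp (d : Fin k → ℕ) :
    piece K k n d ≃ₗ[K] (exponents k n d →₀ K) :=
  (LinearEquiv.ofEq _ _ (weightedHomogeneousSubmodule_eq_finsupp_supported K (wt k n) d)).trans
    (AddMonoidAlgebra.supportedEquivFinsupp _)

instance (d : Fin k → ℕ) : FiniteDimensional K (piece K k n d) :=
  .equiv (pieceEquivFinsupp K d).symm

lemma finrank_piece (d : Fin k → ℕ) : Module.finrank K (piece K k n d) = NN k n d := by
  have := Fintype.ofFinite (exponents k n d)
  rw [(pieceEquivFinsupp K d).finrank_eq, Module.finrank_finsupp_self, ← Nat.card_eq_fintype_card,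
    card_exponents]

section Evaluation

variable {K} {s : ℕ}

noncomputable def evalPoints (P : Fin s → PointRep K k n) :
    MvPolynomial (Var k n) K →ₐ[K] (Fin s → K) :=
  AlgHom.pi fun a => aeval fun v => P a v.1 v.2

lemma evalPoints_apply (P : Fin s → PointRep K k n) (f : MvPolynomial (Var k n) K) (a : Fin s) :
    evalPoints P f a = eval (fun v => P a v.1 v.2) f := by
  simp [evalPoints]

lemma eval_mul_blocks_of_mem_piece {d : Fin k → ℕ} {f : MvPolynomial (Var k n) K}
    (hf : f ∈ piece K k n d) (c : Fin k → K) (x : Var k n → K) :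
    eval (fun v => c v.1 * x v) f = (∏ i, c i ^ d i) * eval x f := by
  rw [eval_eq, eval_eq, Finset.mul_sum]
  refine Finset.sum_congr rfl fun σ hσ => ?_
  have hσd : Finsupp.weight (wt k n) σ = d := hf (mem_support_iff.mp hσ)
  have hc : ∏ v ∈ σ.support, c v.1 ^ σ v = ∏ i, c i ^ d i := by
    rw [Finset.prod_subset σ.support.subset_univ
      (fun v _ hv => by rw [Finsupp.notMem_support_iff.mp hv, pow_zero]),
      ← Finset.univ_sigma_univ, Finset.prod_sigma]
    simp_rw [Finset.prod_pow_eq_pow_sum, ← weight_wt_apply, hσd]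
  simp_rw [mul_pow, Finset.prod_mul_distrib, hc]
  ring

lemma mem_idealOfPoints_iff (P : Fin s → PointRep K k n) {d : Fin k → ℕ}
    {f : MvPolynomial (Var k n) K} (hf : f ∈ piece K k n d) :
    f ∈ idealOfPoints K P ↔ evalPoints P f = 0 := by
  simp only [idealOfPoints, Ideal.mem_iInf, RingHom.mem_ker, _root_.funext_iff, evalPoints_apply,
    Pi.zero_apply]
  refine ⟨fun h a => by simpa using h a 1, fun h a c => ?_⟩
  rw [eval_mul_blocks_of_mem_piece hf c fun v => P a v.1 v.2, h a, mul_zero]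

lemma idealPiece_idealOfPoints (P : Fin s → PointRep K k n) (d : Fin k → ℕ) :
    idealPiece K (idealOfPoints K P) d =
      LinearMap.ker (evalPoints P).toLinearMap ⊓ piece K k n d := by
  ext f
  simp only [idealPiece, Submodule.mem_inf, Submodule.restrictScalars_mem, LinearMap.mem_ker,
    AlgHom.toLinearMap_apply]
  exact and_congr_left (mem_idealOfPoints_iff P)

noncomputable def evalImage (P : Fin s → PointRep K k n) (d : Fin k → ℕ) :
    Submodule K (Fin s → K) :=
  (piece K k n d).map (evalPoints P).toLinearMap

lemma hilbert_eq_finrank_evalImage (P : Fin s → PointRep K k n) (d : Fin k → ℕ) :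
    hilbert K P d = Module.finrank K (evalImage P d) := by
  set φ := (evalPoints P).toLinearMap.domRestrict (piece K k n d)
  have hker : Module.finrank K (idealPiece K (idealOfPoints K P) d) =
      Module.finrank K (LinearMap.ker φ) := by
    rw [idealPiece_idealOfPoints, LinearMap.ker_domRestrict, inf_comm,
      ← Submodule.map_comap_subtype, Submodule.finrank_map_subtype_eq]
  have := φ.finrank_range_add_finrank_ker
  rw [LinearMap.range_domRestrict, finrank_piece] at this
  rw [hilbert, hker, evalImage]
  omega

lemma X_mem_piece (l : Fin k) (m : Fin (n l + 1)) :
    (X ⟨l, m⟩ : MvPolynomial (Var k n) K) ∈ piece K k n (e l) :=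
  isWeightedHomogeneous_X K (wt k n) _

lemma mul_mem_evalImage {P : Fin s → PointRep K k n} {d d' : Fin k → ℕ}
    {f : MvPolynomial (Var k n) K} (hf : f ∈ piece K k n d') {w : Fin s → K}
    (hw : w ∈ evalImage P d) : evalPoints P f * w ∈ evalImage P (d + d') := by
  obtain ⟨g, hg, rfl⟩ := hw
  exact ⟨g * f, IsWeightedHomogeneous.mul hg hf, by simp [mul_comm]⟩

lemma monomial_mem_mulSpan {d : Fin k → ℕ} {l : Fin k} {σ : Var k n →₀ ℕ}
    (hσ : σ ∈ exponents k n (d + e l)) (c : K) :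
    monomial σ c ∈ mulSpan K l (piece K k n d) := by
  obtain ⟨j, hj⟩ : ∃ j, σ ⟨l, j⟩ ≠ 0 := by
    by_contra! h
    simpa [exponents, e, weight_wt_apply, h] using congrFun hσ l
  set τ := σ - Finsupp.single ⟨l, j⟩ 1
  have hστ : σ = Finsupp.single ⟨l, j⟩ 1 + τ :=
    (add_tsub_cancel_of_le (Finsupp.single_le_iff.mpr (Nat.one_le_iff_ne_zero.mpr hj))).symm
  have hτ : Finsupp.weight (wt k n) τ = d := by
    have h := hσ
    rw [exponents, Set.mem_ofPred_eq, hστ, map_add, Finsupp.weight_single, one_smul,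
      add_comm d] at h
    exact add_left_cancel h
  refine Submodule.subset_span ⟨j, monomial τ c, isWeightedHomogeneous_monomial _ _ _ hτ, ?_⟩
  rw [X, monomial_mul, one_mul, ← hστ]

lemma piece_add_e_le_mulSpan (d : Fin k → ℕ) (l : Fin k) :
    piece K k n (d + e l) ≤ mulSpan K l (piece K k n d) := by
  rw [piece, weightedHomogeneousSubmodule_eq_finsupp_supported,
    AddMonoidAlgebra.supported_eq_span_single, Submodule.span_le]
  rintro _ ⟨σ, hσ, rfl⟩
  exact monomial_mem_mulSpan hσ 1

lemma evalImage_add_e_le {P : Fin s → PointRep K k n} {d : Fin k → ℕ} {l : Fin k}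
    {V : Submodule K (Fin s → K)}
    (hV : ∀ m, ∀ w ∈ evalImage P d, evalPoints P (X ⟨l, m⟩) * w ∈ V) :
    evalImage P (d + e l) ≤ V := by
  refine (Submodule.map_mono (piece_add_e_le_mulSpan d l)).trans ?_
  rw [mulSpan, Submodule.map_span, Submodule.span_le]
  rintro _ ⟨_, ⟨m, f, hf, rfl⟩, rfl⟩
  simpa using hV m _ ⟨f, hf, rfl⟩

lemma exists_mem_piece_isUnit_evalPoints [Infinite K] {P : Fin s → PointRep K k n}
    (hP : ∀ a, IsRep K (P a)) (l : Fin k) :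
    ∃ L ∈ piece K k n (e l), IsUnit (evalPoints P L) := by
  obtain ⟨φ, hφ⟩ := Module.exists_dual_forall_apply_ne_zero (K := K) (fun a => P a l)
    fun a => hP a l
  set L : MvPolynomial (Var k n) K := ∑ m, φ (Pi.single m 1) • X ⟨l, m⟩
  have hL : ∀ a, evalPoints P L a = φ (P a l) := fun a => by
    rw [φ.pi_apply_eq_sum_univ, evalPoints_apply, map_sum]
    refine Finset.sum_congr rfl fun m _ => ?_
    rw [smul_eval, eval_X, smul_eq_mul, mul_comm]
    congr 3
    exact funext fun j => (Pi.single_apply m 1 j).trans (if_congr eq_comm rfl rfl)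
  exact ⟨L, Submodule.sum_mem _ fun m _ => Submodule.smul_mem _ _ (X_mem_piece l m),
    Pi.isUnit_iff.mpr fun a => (hL a).symm ▸ (hφ a).isUnit⟩

lemma finrank_map_mulLeft {A : Type*} [Ring A] [Algebra K A] {u : A} (hu : IsUnit u)
    (V : Submodule K A) : Module.finrank K (V.map (LinearMap.mulLeft K u)) = Module.finrank K V :=
  (Submodule.equivMapOfInjective _ hu.mul_right_injective V).finrank_eq.symm

lemma exists_isUnit_map_mulLeft_evalImage_le [Infinite K] {P : Fin s → PointRep K k n}
    (hP : ∀ a, IsRep K (P a)) (l : Fin k) :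
    ∃ u : Fin s → K, IsUnit u ∧
      ∀ d, (evalImage P d).map (LinearMap.mulLeft K u) ≤ evalImage P (d + e l) := by
  obtain ⟨L, hL, hu⟩ := exists_mem_piece_isUnit_evalPoints hP l
  refine ⟨_, hu, fun d => ?_⟩
  rintro _ ⟨w, hw, rfl⟩
  exact mul_mem_evalImage hL hw

lemma evalImage_add_e_add_e_eq_map_mulLeft {P : Fin s → PointRep K k n} {u : Fin s → K}
    {i : Fin k → ℕ} {l : Fin k}
    (hu : ∀ d, (evalImage P d).map (LinearMap.mulLeft K u) ≤ evalImage P (d + e l))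
    (h : (evalImage P i).map (LinearMap.mulLeft K u) = evalImage P (i + e l)) :
    evalImage P (i + e l + e l) = (evalImage P (i + e l)).map (LinearMap.mulLeft K u) := by
  refine le_antisymm (evalImage_add_e_le fun m w hw => ?_) (hu _)
  rw [← h] at hw
  obtain ⟨w', hw', rfl⟩ := hw
  exact ⟨_, mul_mem_evalImage (X_mem_piece l m) hw', by simp [mul_left_comm]⟩

end Evaluation

theorem hilbert_growth_general (K : Type) [Field K] [IsAlgClosed K]
    (k : ℕ) (n : Fin k → ℕ) {s : ℕ} (P : Fin s → PointRep K k n) (hP : SPoints K P) :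
    (∀ (i : Fin k → ℕ) (l : Fin k), hilbert K P i ≤ hilbert K P (i + e l)) ∧
    (∀ (i : Fin k → ℕ) (l : Fin k), hilbert K P i = hilbert K P (i + e l) →
        hilbert K P (i + e l) = hilbert K P (i + e l + e l)) := by
  simp only [hilbert_eq_finrank_evalImage]
  refine ⟨fun i l => ?_, fun i l h => ?_⟩ <;>
    obtain ⟨u, hu, hmul⟩ := exists_isUnit_map_mulLeft_evalImage_le hP.1 l
  · rw [← finrank_map_mulLeft hu]
    exact Submodule.finrank_mono (hmul i)
  · have heq := Submodule.eq_of_le_of_finrank_eq (hmul i) (by rw [finrank_map_mulLeft hu, h])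
    rw [evalImage_add_e_add_e_eq_map_mulLeft hmul heq, finrank_map_mulLeft hu]

theorem hilbert_growth (K : Type) [Field K] [IsAlgClosed K] [CharZero K]
    (k : ℕ) (n : Fin k → ℕ) {s : ℕ} (P : Fin s → PointRep K k n) (hP : SPoints K P) :
    (∀ (i : Fin k → ℕ) (l : Fin k), hilbert K P i ≤ hilbert K P (i + e l)) ∧
    (∀ (i : Fin k → ℕ) (l : Fin k), hilbert K P i = hilbert K P (i + e l) →
        hilbert K P (i + e l) = hilbert K P (i + e l + e l)) :=
  hilbert_growth_general K k n P hP

end MultiProjPoints
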